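/- Let f : ℝ^{d_x} × ℝ^{d_y} → ℝ be differentiable with L_g-Lipschitz gradient, let y* : ℝ^{d_x} → ℝ^{d_y} be L_y-Lipschitz, let μ > 0, and set C_p = L_g(1 + L_y)L_y. Define ḡ(x) = ∇_x f(x, y*(x)) + Jac y_μ(x)ᵀ ∇_y f(x, y*(x)) and F_μ(x) = f(x, y_μ(x)). Then for every x ∈ ℝ^{d_x}, ⟨∇F_μ(x), ḡ(x)⟩ ≥ (1/2)‖ḡ(x)‖² − (1/2) C_p² μ². -/

import Mathlib

open MeasureTheory Metric
open scoped InnerProductSpace RealInnerProductSpace NNReal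

noncomputable section

/-- `ℝ^n` with the Euclidean norm. -/
abbrev E (n : ℕ) : Type := EuclideanSpace ℝ (Fin n)

/-- Uniform (normalized Lebesgue) probability measure on the closed unit ball of `ℝ^n`. -/
def uniformBall (n : ℕ) : Measure (E n) :=
  (volume (closedBall (0 : E n) 1))⁻¹ • volume.restrict (closedBall (0 : E n) 1)

/-- Uniform (rotation-invariant) probability measure on the unit sphere of `ℝ^n`,
viewed as a measure on the ambient space. -/
def uniformSphere (n : ℕ) : Measure (E n) :=
  ((volume : Measure (E n)).toSphere Set.univ)⁻¹ •
    Measure.map Subtype.val ((volume : Measure (E n)).toSphere)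

/-- Ball smoothing `y_μ` of a map `y : ℝ^{d_x} → ℝ^{d_y}`:
`y_μ(x) = E_{u ~ U(B^{d_x})}[y(x + μ u)]`. -/
def ymu {dx dy : ℕ} (y : E dx → E dy) (μ : ℝ) (x : E dx) : E dy :=
  ∫ u, y (x + μ • u) ∂(uniformBall dx)

/-- Partial gradient `∇_x f` of `f : ℝ^{d_x} × ℝ^{d_y} → ℝ` in its first argument. -/
def gradx {dx dy : ℕ} (f : E dx × E dy → ℝ) (x : E dx) (y : E dy) : E dx :=
  gradient (fun x' => f (x', y)) x

/-- Partial gradient `∇_y f` of `f : ℝ^{d_x} × ℝ^{d_y} → ℝ` in its second argument. -/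
def grady {dx dy : ℕ} (f : E dx × E dy → ℝ) (x : E dx) (y : E dy) : E dy :=
  gradient (fun y' => f (x, y')) y

/-- Smoothed surrogate `F_μ(x) = f(x, y_μ(x))`. -/
def Fmu {dx dy : ℕ} (f : E dx × E dy → ℝ) (y : E dx → E dy) (μ : ℝ) (x : E dx) : ℝ :=
  f (x, ymu y μ x)

/-!
`∇F_μ(x) = ∇_x f(x, y_μ(x)) + Jac y_μ(x)ᵀ ∇_y f(x, y_μ(x))` differs from `ḡ(x)` only in
that the partial gradients are evaluated at `y_μ(x)` instead of `y*(x)`. As an average of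
values of `y*` at distance at most `μ` from `x`, `y_μ(x)` lies within `L_y μ` of `y*(x)`, and
the averaged Jacobian has norm at most `L_y`; the `L_g`-Lipschitz gradient of `f` then gives
`‖∇F_μ(x) - ḡ(x)‖ ≤ C_p μ`. Finally `⟪a, b⟫ ≥ ½‖b‖² - ½‖a - b‖²` for all vectors `a`, `b`.
-/

open InnerProductSpace ContinuousLinearMap

section UniformBall

variable {n : ℕ}

instance (n : ℕ) : IsProbabilityMeasure (uniformBall n) := by
  have hpos : volume (closedBall (0 : E n) 1) ≠ 0 :=
    (measure_closedBall_pos volume 0 one_pos).ne'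
  have hfin : volume (closedBall (0 : E n) 1) ≠ ⊤ := (isCompact_closedBall 0 1).measure_ne_top
  constructor
  rw [uniformBall, Measure.smul_apply, Measure.restrict_apply_univ, smul_eq_mul,
    ENNReal.inv_mul_cancel hpos hfin]

lemma uniformBall_absolutelyContinuous : uniformBall n ≪ volume :=
  Measure.smul_absolutelyContinuous.trans Measure.restrict_le_self.absolutelyContinuous

lemma ae_norm_le_one_uniformBall : ∀ᵐ u ∂(uniformBall n), ‖u‖ ≤ 1 := by
  refine Measure.ae_smul_measure ?_ _
  filter_upwards [ae_restrict_mem measurableSet_closedBall] with u hu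
  simpa using hu

lemma integrable_comp_add_smul_uniformBall {F : Type*} [NormedAddCommGroup F]
    {g : E n → F} (hg : Continuous g) (x : E n) (μ : ℝ) :
    Integrable (fun u => g (x + μ • u)) (uniformBall n) :=
  ((hg.comp (continuous_const.add (continuous_const_smul μ))).continuousOn.integrableOn_compact
    (isCompact_closedBall 0 1)).smul_measure
    (by simp [(measure_closedBall_pos volume (0 : E n) one_pos).ne'])

lemma ae_comp_add_smul_uniformBall {μ : ℝ} (hμ : μ ≠ 0) (x : E n) {p : E n → Prop}
    (h : ∀ᵐ v ∂(volume : Measure (E n)), p v) :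
    ∀ᵐ u ∂(uniformBall n), p (x + μ • u) :=
  have hmap : Measure.QuasiMeasurePreserving (fun u : E n => x + μ • u) volume volume :=
    (measurePreserving_add_left volume x).quasiMeasurePreserving.comp
      (Measure.quasiMeasurePreserving_smul _ hμ)
  uniformBall_absolutelyContinuous.ae_le (hmap.ae h)

end UniformBall

section Smoothing

variable {dx dy : ℕ} {y : E dx → E dy} {L : ℝ≥0}

/-- Differentiation under the integral sign: the translates of `y` are uniformly `L`-Lipschitz,
and `y` is differentiable almost everywhere by Rademacher's theorem. -/
lemma hasFDerivAt_ymu (hy : LipschitzWith L y) {μ : ℝ} (hμ : μ ≠ 0) (x : E dx) :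
    HasFDerivAt (ymu y μ) (∫ u, fderiv ℝ y (x + μ • u) ∂(uniformBall dx)) x := by
  have hshift (u : E dx) : LipschitzWith L (fun x' => y (x' + μ • u)) := by
    simpa [Function.comp_def] using hy.comp (IsometryEquiv.addRight (μ • u)).isometry.lipschitz
  refine (hasFDerivAt_integral_of_dominated_loc_of_lip (F := fun x' u => y (x' + μ • u))
    (bound := fun _ => (L : ℝ)) (ball_mem_nhds x one_pos)
    (.of_forall fun x' => (integrable_comp_add_smul_uniformBall hy.continuous x' μ).1)
    (integrable_comp_add_smul_uniformBall hy.continuous x μ)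
    ((measurable_fderiv ℝ y).comp
      (measurable_const.add (measurable_const_smul μ))).aestronglyMeasurable
    (.of_forall fun u => by simpa using (hshift u).lipschitzOnWith)
    (integrable_const _) ?_).2
  filter_upwards [ae_comp_add_smul_uniformBall hμ x hy.ae_differentiableAt] with u hu
  simpa [Function.comp_def] using hu.hasFDerivAt.comp x ((hasFDerivAt_id x).add_const (μ • u))

lemma norm_fderiv_ymu_le (hy : LipschitzWith L y) {μ : ℝ} (hμ : μ ≠ 0) (x : E dx) :
    ‖fderiv ℝ (ymu y μ) x‖ ≤ L := by
  rw [(hasFDerivAt_ymu hy hμ x).fderiv]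
  simpa using norm_integral_le_of_norm_le (integrable_const (L : ℝ))
    (μ := uniformBall dx)
    (.of_forall fun u => norm_fderiv_le_of_lipschitz ℝ (x₀ := x + μ • u) hy)

lemma norm_ymu_sub_le (hy : LipschitzWith L y) (μ : ℝ) (x : E dx) :
    ‖ymu y μ x - y x‖ ≤ L * |μ| := by
  have hmean : ymu y μ x - y x = ∫ u, (y (x + μ • u) - y x) ∂(uniformBall dx) := by
    rw [integral_sub (integrable_comp_add_smul_uniformBall hy.continuous x μ) (integrable_const _)]
    simp [ymu]
  rw [hmean]
  refine (norm_integral_le_of_norm_le (integrable_const ((L : ℝ) * |μ|)) ?_).trans (by simp)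
  filter_upwards [ae_norm_le_one_uniformBall] with u hu
  calc ‖y (x + μ • u) - y x‖ ≤ L * ‖μ • u‖ := by
        simpa [dist_eq_norm] using hy.dist_le_mul (x + μ • u) x
    _ ≤ L * |μ| := by
        rw [norm_smul, Real.norm_eq_abs]
        exact mul_le_mul_of_nonneg_left (mul_le_of_le_one_right (abs_nonneg μ) hu) L.coe_nonneg

end Smoothing

section PartialGradients

variable {dx dy : ℕ} {f : E dx × E dy → ℝ}

lemma gradx_eq_toDual_symm {x : E dx} {y : E dy} (hf : DifferentiableAt ℝ f (x, y)) :
    gradx f x y = (toDual ℝ (E dx)).symm ((fderiv ℝ f (x, y)).comp (inl ℝ (E dx) (E dy))) := by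
  have hpartial : HasFDerivAt (fun x' => f (x', y)) _ x :=
    hf.hasFDerivAt.comp x (hasFDerivAt_prodMk_left x y)
  rw [gradx, gradient, hpartial.fderiv]

lemma grady_eq_toDual_symm {x : E dx} {y : E dy} (hf : DifferentiableAt ℝ f (x, y)) :
    grady f x y = (toDual ℝ (E dy)).symm ((fderiv ℝ f (x, y)).comp (inr ℝ (E dx) (E dy))) := by
  have hpartial : HasFDerivAt (fun y' => f (x, y')) _ y :=
    hf.hasFDerivAt.comp y (hasFDerivAt_prodMk_right x y)
  rw [grady, gradient, hpartial.fderiv]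

lemma norm_gradx_sub_le (hf : Differentiable ℝ f) (x : E dx) (y₁ y₂ : E dy) :
    ‖gradx f x y₁ - gradx f x y₂‖ ≤ ‖fderiv ℝ f (x, y₁) - fderiv ℝ f (x, y₂)‖ := by
  rw [gradx_eq_toDual_symm (hf _), gradx_eq_toDual_symm (hf _), ← map_sub,
    LinearIsometryEquiv.norm_map, ← sub_comp]
  exact (opNorm_comp_le _ _).trans
    (mul_le_of_le_one_right (norm_nonneg _) (norm_inl_le_one ℝ _ _))

lemma norm_grady_sub_le (hf : Differentiable ℝ f) (x : E dx) (y₁ y₂ : E dy) :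
    ‖grady f x y₁ - grady f x y₂‖ ≤ ‖fderiv ℝ f (x, y₁) - fderiv ℝ f (x, y₂)‖ := by
  rw [grady_eq_toDual_symm (hf _), grady_eq_toDual_symm (hf _), ← map_sub,
    LinearIsometryEquiv.norm_map, ← sub_comp]
  exact (opNorm_comp_le _ _).trans
    (mul_le_of_le_one_right (norm_nonneg _) (norm_inr_le_one ℝ _ _))

lemma gradient_comp_prodMk {h : E dx → E dy} {A : E dx →L[ℝ] E dy} {x : E dx}
    (hf : DifferentiableAt ℝ f (x, h x)) (hh : HasFDerivAt h A x) :
    gradient (fun x' => f (x', h x')) x = gradx f x (h x) + adjoint A (grady f x (h x)) := by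
  refine ext_inner_right ℝ fun v => ?_
  have hchain : HasFDerivAt (fun x' => f (x', h x')) _ x :=
    hf.hasFDerivAt.comp x ((hasFDerivAt_id x).prodMk hh)
  have hsplit : ((v, A v) : E dx × E dy) = inl ℝ _ _ v + inr ℝ _ _ (A v) := by simp
  rw [gradient, toDual_symm_apply, hchain.fderiv, inner_add_left, adjoint_inner_left,
    gradx_eq_toDual_symm hf, grady_eq_toDual_symm hf, toDual_symm_apply, toDual_symm_apply]
  simp only [comp_apply, prod_apply, id_apply, hsplit, map_add]

lemma norm_gradx_add_adjoint_grady_sub_le {Lg : ℝ} (hf : Differentiable ℝ f)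
    (hgrad : ∀ p q : E dx × E dy, ‖fderiv ℝ f p - fderiv ℝ f q‖ ≤ Lg * ‖p - q‖)
    (A : E dx →L[ℝ] E dy) (x : E dx) (y₁ y₂ : E dy) :
    ‖(gradx f x y₁ + adjoint A (grady f x y₁)) - (gradx f x y₂ + adjoint A (grady f x y₂))‖
      ≤ Lg * (1 + ‖A‖) * ‖y₁ - y₂‖ := by
  have hD : ‖fderiv ℝ f (x, y₁) - fderiv ℝ f (x, y₂)‖ ≤ Lg * ‖y₁ - y₂‖ := by
    simpa using hgrad (x, y₁) (x, y₂)
  have hadj : ‖adjoint A (grady f x y₁ - grady f x y₂)‖ ≤ ‖A‖ * (Lg * ‖y₁ - y₂‖) := by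
    refine ((adjoint A).le_opNorm _).trans ?_
    rw [LinearIsometryEquiv.norm_map]
    exact mul_le_mul_of_nonneg_left ((norm_grady_sub_le hf x y₁ y₂).trans hD) (norm_nonneg A)
  calc _ = ‖(gradx f x y₁ - gradx f x y₂) + adjoint A (grady f x y₁ - grady f x y₂)‖ := by
          rw [map_sub]; abel_nf
    _ ≤ Lg * ‖y₁ - y₂‖ + ‖A‖ * (Lg * ‖y₁ - y₂‖) :=
          (norm_add_le _ _).trans (add_le_add ((norm_gradx_sub_le hf x y₁ y₂).trans hD) hadj)
    _ = Lg * (1 + ‖A‖) * ‖y₁ - y₂‖ := by ring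

end PartialGradients

lemma real_inner_ge_half_norm_sq_sub {F : Type*} [NormedAddCommGroup F] [InnerProductSpace ℝ F]
    (a b : F) : ⟪a, b⟫_ℝ ≥ (1 / 2) * ‖b‖ ^ 2 - (1 / 2) * ‖a - b‖ ^ 2 := by
  nlinarith [norm_sub_sq_real a b, sq_nonneg ‖a‖]

/-- with `ḡ(x) = ∇_x f(x, y*(x)) + Jac y_μ(x)ᵀ ∇_y f(x, y*(x))` and
`C_p = L_g(1+L_y)L_y`, one has `⟨∇F_μ(x), ḡ(x)⟩ ≥ ½‖ḡ(x)‖² − ½ C_p² μ²`. -/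
theorem stmt14 (dx dy : ℕ) (f : E dx × E dy → ℝ) (Lg : ℝ≥0)
    (hfdiff : Differentiable ℝ f)
    (hgradLip : ∀ p q : E dx × E dy, ‖fderiv ℝ f p - fderiv ℝ f q‖ ≤ (Lg : ℝ) * ‖p - q‖)
    (ystar : E dx → E dy) (Ly : ℝ≥0) (hLip : LipschitzWith Ly ystar)
    (μ : ℝ) (hμ : 0 < μ) (x : E dx) :
    ⟪gradient (Fmu f ystar μ) x,
        gradx f x (ystar x)
          + (ContinuousLinearMap.adjoint (fderiv ℝ (ymu ystar μ) x)) (grady f x (ystar x))⟫_ℝ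
      ≥ (1 / 2) * ‖gradx f x (ystar x)
            + (ContinuousLinearMap.adjoint (fderiv ℝ (ymu ystar μ) x))
                (grady f x (ystar x))‖ ^ 2
        - (1 / 2) * ((Lg : ℝ) * (1 + (Ly : ℝ)) * (Ly : ℝ)) ^ 2 * μ ^ 2 := by
  set A := fderiv ℝ (ymu ystar μ) x
  have hA : HasFDerivAt (ymu ystar μ) A x :=
    (hasFDerivAt_ymu hLip hμ.ne' x).differentiableAt.hasFDerivAt
  have hgrad : gradient (Fmu f ystar μ) x
      = gradx f x (ymu ystar μ x) + adjoint A (grady f x (ymu ystar μ x)) :=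
    gradient_comp_prodMk (hfdiff _) hA
  have hdist :
      ‖gradient (Fmu f ystar μ) x - (gradx f x (ystar x) + adjoint A (grady f x (ystar x)))‖
        ≤ Lg * (1 + Ly) * Ly * μ :=
    calc _ ≤ Lg * (1 + ‖A‖) * ‖ymu ystar μ x - ystar x‖ := by
          rw [hgrad]; exact norm_gradx_add_adjoint_grady_sub_le hfdiff hgradLip A x _ _
      _ ≤ Lg * (1 + Ly) * (Ly * |μ|) := by
          gcongr
          exacts [norm_fderiv_ymu_le hLip hμ.ne' x, norm_ymu_sub_le hLip μ x]
      _ = Lg * (1 + Ly) * Ly * μ := by rw [abs_of_pos hμ]; ring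
  calc _ ≥ _ := real_inner_ge_half_norm_sq_sub _ _
    _ ≥ (1 / 2) * ‖gradx f x (ystar x) + adjoint A (grady f x (ystar x))‖ ^ 2
          - (1 / 2) * (Lg * (1 + Ly) * Ly * μ) ^ 2 := by gcongr
    _ = _ := by ring
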